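/- arXiv:2303.06646 — 2 statements merged into one kernel-verified Lean document; each statement's English description precedes it below -/
import Mathlib

section
/- Let (M, E) be an exact category and 𝒫 a pseudo-cluster tilting subcategory of M. Then every conflation of M which is either Hom(𝒫,−)-exact or Hom(−,𝒫)-exact belongs to the class 𝒯. -/
open CategoryTheory CategoryTheory.Limits

universe v u

namespace PaperQEC

section QuotientCategory

variable {C : Type u} [Category.{v} C] [Preadditive C]

/-- `f` factors through an object belonging to `P`. -/
def FactorsThru (P : Set C) {X Y : C} (f : X ⟶ Y) : Prop :=
  ∃ Z ∈ P, ∃ (g : X ⟶ Z) (h : Z ⟶ Y), g ≫ h = f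

/-- The subgroup of `Hom(X, Y)` generated by morphisms factoring through an object of `P`
(for `P` closed under finite sums this is just the set of such morphisms). -/
def factorIdeal (P : Set C) (X Y : C) : AddSubgroup (X ⟶ Y) :=
  AddSubgroup.closure {f | FactorsThru P f}

lemma factorIdeal_comp_left (P : Set C) {X Y Z : C} {f : X ⟶ Y}
    (hf : f ∈ factorIdeal P X Y) (g : Y ⟶ Z) : f ≫ g ∈ factorIdeal P X Z := by
  have h : factorIdeal P X Y ≤
      (factorIdeal P X Z).comap (AddMonoidHom.mk' (fun u : X ⟶ Y => u ≫ g)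
        (fun a b => Preadditive.add_comp _ _ _ _ _ _)) := by
    refine (AddSubgroup.closure_le _).mpr ?_
    rintro u ⟨Zp, hZp, a, b, rfl⟩
    exact AddSubgroup.mem_comap.mpr
      (AddSubgroup.subset_closure ⟨Zp, hZp, a, b ≫ g, (Category.assoc _ _ _).symm⟩)
  exact h hf

lemma factorIdeal_comp_right (P : Set C) {X Y Z : C} (f : X ⟶ Y) {g : Y ⟶ Z}
    (hg : g ∈ factorIdeal P Y Z) : f ≫ g ∈ factorIdeal P X Z := by
  have h : factorIdeal P Y Z ≤
      (factorIdeal P X Z).comap (AddMonoidHom.mk' (fun u : Y ⟶ Z => f ≫ u)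
        (fun a b => Preadditive.comp_add _ _ _ _ _ _)) := by
    refine (AddSubgroup.closure_le _).mpr ?_
    rintro u ⟨Zp, hZp, a, b, rfl⟩
    exact AddSubgroup.mem_comap.mpr
      (AddSubgroup.subset_closure ⟨Zp, hZp, f ≫ a, b, Category.assoc _ _ _⟩)
  exact h hg

/-- Objects of the quotient (stable) category `C / P`. -/
structure QuotObj (P : Set C) : Type u where
  obj : C

variable (P : Set C)

instance quotCategory : Category.{v} (QuotObj P) where
  Hom A B := (A.obj ⟶ B.obj) ⧸ factorIdeal P A.obj B.obj
  id A := QuotientAddGroup.mk (𝟙 A.obj)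
  comp {A B D} f g :=
    Quotient.liftOn₂ f g (fun a b => QuotientAddGroup.mk (a ≫ b)) (by
      intro a₁ b₁ a₂ b₂ ha hb
      have ha' : -a₁ + a₂ ∈ factorIdeal P A.obj B.obj := QuotientAddGroup.leftRel_apply.mp ha
      have hb' : -b₁ + b₂ ∈ factorIdeal P B.obj D.obj := QuotientAddGroup.leftRel_apply.mp hb
      refine (QuotientAddGroup.eq (s := factorIdeal P A.obj D.obj)).mpr ?_
      have h1 : (-a₁ + a₂) ≫ b₁ ∈ factorIdeal P A.obj D.obj :=
        factorIdeal_comp_left P ha' b₁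
      have h2 : a₂ ≫ (-b₁ + b₂) ∈ factorIdeal P A.obj D.obj :=
        factorIdeal_comp_right P a₂ hb'
      have h3 := AddSubgroup.add_mem _ h1 h2
      have heq : -(a₁ ≫ b₁) + a₂ ≫ b₂ = (-a₁ + a₂) ≫ b₁ + a₂ ≫ (-b₁ + b₂) := by
        simp only [Preadditive.add_comp, Preadditive.comp_add, Preadditive.neg_comp,
          Preadditive.comp_neg]
        abel
      rw [heq]; exact h3)
  id_comp {A B} f := by
    induction f using Quotient.inductionOn with
    | h a => exact congrArg QuotientAddGroup.mk (Category.id_comp a)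
  comp_id {A B} f := by
    induction f using Quotient.inductionOn with
    | h a => exact congrArg QuotientAddGroup.mk (Category.comp_id a)
  assoc {A B D E} f g h := by
    induction f using Quotient.inductionOn with
    | h a =>
    induction g using Quotient.inductionOn with
    | h b =>
    induction h using Quotient.inductionOn with
    | h c => exact congrArg QuotientAddGroup.mk (Category.assoc a b c)

/-- The image in the quotient category of a morphism of `C`. -/
def qmap {X Y : C} (f : X ⟶ Y) : (QuotObj.mk X : QuotObj P) ⟶ QuotObj.mk Y :=
  QuotientAddGroup.mk f

instance quotPreadditive : Preadditive (QuotObj P) where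
  homGroup A B :=
    inferInstanceAs (AddCommGroup ((A.obj ⟶ B.obj) ⧸ factorIdeal P A.obj B.obj))
  add_comp A B D f f' g := by
    induction f using Quotient.inductionOn with
    | h a =>
    induction f' using Quotient.inductionOn with
    | h a' =>
    induction g using Quotient.inductionOn with
    | h b =>
      show QuotientAddGroup.mk ((a + a') ≫ b) =
        QuotientAddGroup.mk (a ≫ b) + QuotientAddGroup.mk (a' ≫ b)
      rw [Preadditive.add_comp]
      rfl
  comp_add A B D f g g' := by
    induction f using Quotient.inductionOn with
    | h a =>
    induction g using Quotient.inductionOn with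
    | h b =>
    induction g' using Quotient.inductionOn with
    | h b' =>
      show QuotientAddGroup.mk (a ≫ (b + b')) =
        QuotientAddGroup.mk (a ≫ b) + QuotientAddGroup.mk (a ≫ b')
      rw [Preadditive.comp_add]
      rfl

end QuotientCategory

section Exact

variable {C : Type u} [Category.{v} C] [Preadditive C]

/-- `k` is a kernel of `f`. -/
def IsKernelOf {K X Y : C} (k : K ⟶ X) (f : X ⟶ Y) : Prop :=
  k ≫ f = 0 ∧ ∀ {T : C} (g : T ⟶ X), g ≫ f = 0 → ∃! t : T ⟶ K, t ≫ k = g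

/-- `c` is a cokernel of `f`. -/
def IsCokernelOf {X Y Q : C} (c : Y ⟶ Q) (f : X ⟶ Y) : Prop :=
  f ≫ c = 0 ∧ ∀ {T : C} (g : Y ⟶ T), f ≫ g = 0 → ∃! t : Q ⟶ T, c ≫ t = g

/-- A class of composable pairs of morphisms (the prospective conflations). -/
abbrev ConfClass (D : Type*) [Category D] :=
  ∀ ⦃X Y Z : D⦄, (X ⟶ Y) → (Y ⟶ Z) → Prop

/-- A Quillen exact structure on an additive category: a class of kernel–cokernel pairs
(conflations), closed under isomorphisms, containing the identities as inflations and
deflations, with inflations and deflations closed under composition, pushouts of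
inflations and pullbacks of deflations existing and being inflations resp. deflations. -/
structure ExactStructure (D : Type u) [Category.{v} D] [Preadditive D] where
  conf : ConfClass D
  ker_of_conf : ∀ {X Y Z : D} {i : X ⟶ Y} {d : Y ⟶ Z}, conf i d → IsKernelOf i d
  coker_of_conf : ∀ {X Y Z : D} {i : X ⟶ Y} {d : Y ⟶ Z}, conf i d → IsCokernelOf d i
  isoClosed : ∀ {X Y Z X' Y' Z' : D} {i : X ⟶ Y} {d : Y ⟶ Z} {i' : X' ⟶ Y'} {d' : Y' ⟶ Z'}
    (eX : X ≅ X') (eY : Y ≅ Y') (eZ : Z ≅ Z'),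
    i ≫ eY.hom = eX.hom ≫ i' → d ≫ eZ.hom = eY.hom ≫ d' → conf i d → conf i' d'
  id_isInflation : ∀ X : D, ∃ (Z : D) (d : X ⟶ Z), conf (𝟙 X) d
  id_isDeflation : ∀ X : D, ∃ (W : D) (i : W ⟶ X), conf i (𝟙 X)
  infl_comp : ∀ {X Y Z : D} (i : X ⟶ Y) (j : Y ⟶ Z),
    (∃ (W : D) (d : Y ⟶ W), conf i d) → (∃ (W : D) (d : Z ⟶ W), conf j d) →
    ∃ (W : D) (d : Z ⟶ W), conf (i ≫ j) d
  defl_comp : ∀ {X Y Z : D} (p : X ⟶ Y) (q : Y ⟶ Z),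
    (∃ (W : D) (i : W ⟶ X), conf i p) → (∃ (W : D) (i : W ⟶ Y), conf i q) →
    ∃ (W : D) (i : W ⟶ X), conf i (p ≫ q)
  infl_pushout : ∀ {X Y : D} (i : X ⟶ Y), (∃ (W : D) (d : Y ⟶ W), conf i d) →
    ∀ {A : D} (f : X ⟶ A), ∃ (B : D) (i' : A ⟶ B) (g : Y ⟶ B),
      (∃ (W : D) (d : B ⟶ W), conf i' d) ∧ IsPushout i f g i'
  defl_pullback : ∀ {Y Z : D} (p : Y ⟶ Z), (∃ (W : D) (i : W ⟶ Y), conf i p) →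
    ∀ {B : D} (f : B ⟶ Z), ∃ (A : D) (p' : A ⟶ B) (g : A ⟶ Y),
      (∃ (W : D) (i : W ⟶ A), conf i p') ∧ IsPullback g p' p f

/-- `i` is an inflation, i.e. the first map of some conflation. -/
def IsInflation (E : ConfClass C) {X Y : C} (i : X ⟶ Y) : Prop :=
  ∃ (Z : C) (d : Y ⟶ Z), E i d

/-- `d` is a deflation, i.e. the second map of some conflation. -/
def IsDeflation (E : ConfClass C) {Y Z : C} (d : Y ⟶ Z) : Prop :=
  ∃ (X : C) (i : X ⟶ Y), E i d

/-- `P` is a full additive subcategory: nonempty, closed under isomorphisms,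
finite sums and summands. -/
structure IsAddSubcat [HasBinaryBiproducts C] (P : Set C) : Prop where
  nonempty : P.Nonempty
  isoClosed : ∀ {X Y : C}, (X ≅ Y) → X ∈ P → Y ∈ P
  sumClosed : ∀ {X Y : C}, X ∈ P → Y ∈ P → (X ⊞ Y) ∈ P
  summandClosed : ∀ {X Y : C} (s : X ⟶ Y) (r : Y ⟶ X), s ≫ r = 𝟙 X → Y ∈ P → X ∈ P

/-- `f : Q ⟶ X` is a `P`-precover of `X`. -/
def IsPrecover (P : Set C) {Q X : C} (f : Q ⟶ X) : Prop :=
  Q ∈ P ∧ ∀ (Q' : C), Q' ∈ P → ∀ g : Q' ⟶ X, ∃ h : Q' ⟶ Q, h ≫ f = g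

/-- `f : X ⟶ Q` is a `P`-preenvelope of `X`. -/
def IsPreenvelope (P : Set C) {X Q : C} (f : X ⟶ Q) : Prop :=
  Q ∈ P ∧ ∀ (Q' : C), Q' ∈ P → ∀ g : X ⟶ Q', ∃ h : Q ⟶ Q', f ≫ h = g

/-- `P` is strongly contravariantly finite: every object has a `P`-precover
which is a deflation. -/
def StronglyContraFinite (E : ConfClass C) (P : Set C) : Prop :=
  ∀ X : C, ∃ (Q : C) (f : Q ⟶ X), IsPrecover P f ∧ IsDeflation E f

/-- `P` is strongly covariantly finite: every object has a `P`-preenvelope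
which is an inflation. -/
def StronglyCovFinite (E : ConfClass C) (P : Set C) : Prop :=
  ∀ X : C, ∃ (Q : C) (f : X ⟶ Q), IsPreenvelope P f ∧ IsInflation E f

/-- The pair `(i, d)` is `Hom(P,-)`-exact: for every `Q ∈ P`, the sequence
`0 → Hom(Q,X) → Hom(Q,Y) → Hom(Q,Z) → 0` is exact. -/
def HomCovExact (P : Set C) {X Y Z : C} (i : X ⟶ Y) (d : Y ⟶ Z) : Prop :=
  ∀ Q : C, Q ∈ P →
    (∀ g : Q ⟶ X, g ≫ i = 0 → g = 0) ∧
    (∀ u : Q ⟶ Y, u ≫ d = 0 → ∃ g : Q ⟶ X, g ≫ i = u) ∧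
    (∀ h : Q ⟶ Z, ∃ u : Q ⟶ Y, u ≫ d = h)

/-- The pair `(i, d)` is `Hom(-,P)`-exact: for every `Q ∈ P`, the sequence
`0 → Hom(Z,Q) → Hom(Y,Q) → Hom(X,Q) → 0` is exact. -/
def HomContraExact (P : Set C) {X Y Z : C} (i : X ⟶ Y) (d : Y ⟶ Z) : Prop :=
  ∀ Q : C, Q ∈ P →
    (∀ g : Z ⟶ Q, d ≫ g = 0 → g = 0) ∧
    (∀ u : Y ⟶ Q, i ≫ u = 0 → ∃ g : Z ⟶ Q, d ≫ g = u) ∧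
    (∀ h : X ⟶ Q, ∃ u : Y ⟶ Q, i ≫ u = h)

/-- Condition (▲): `P` is strongly covariantly finite and every `X` admits a conflation
`0 → X → Q₀ → Q₁ → 0` with `Q₀, Q₁ ∈ P` whose inflation is a `P`-preenvelope. -/
def CondEnv (E : ConfClass C) (P : Set C) : Prop :=
  StronglyCovFinite E P ∧
  ∀ X : C, ∃ (Q₀ Q₁ : C) (α : X ⟶ Q₀) (q : Q₀ ⟶ Q₁),
    E α q ∧ Q₀ ∈ P ∧ Q₁ ∈ P ∧ IsPreenvelope P α

/-- Condition (▼): `P` is strongly contravariantly finite and every `X` admits a conflation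
`0 → P₁ → P₀ → X → 0` with `P₀, P₁ ∈ P` whose deflation is a `P`-precover. -/
def CondCov (E : ConfClass C) (P : Set C) : Prop :=
  StronglyContraFinite E P ∧
  ∀ X : C, ∃ (P₀ P₁ : C) (i : P₁ ⟶ P₀) (β : P₀ ⟶ X),
    E i β ∧ P₀ ∈ P ∧ P₁ ∈ P ∧ IsPrecover P β

/-- `P` is a pseudo-cluster tilting subcategory. -/
def PseudoClusterTilting (E : ConfClass C) (P : Set C) : Prop :=
  CondEnv E P ∧ CondCov E P

/-- The conflation `(i, d)` splits. -/
def Splits {X Y Z : C} (i : X ⟶ Y) (d : Y ⟶ Z) : Prop :=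
  (∃ r : Y ⟶ X, i ≫ r = 𝟙 X) ∧ ∃ s : Z ⟶ Y, s ≫ d = 𝟙 Z

/-- `P` is self-orthogonal with respect to the class `cl` of conflations: every
conflation in `cl` with both end terms in `P` splits. -/
def SelfOrthWrt (P : Set C) (cl : ConfClass C) : Prop :=
  ∀ ⦃X Y Z : C⦄ (i : X ⟶ Y) (d : Y ⟶ Z), cl i d → X ∈ P → Z ∈ P → Splits i d

/-- `P` is a cluster tilting subcategory: a pseudo-cluster tilting subcategory which is
self-orthogonal with respect to all conflations. -/
def ClusterTilting (E : ConfClass C) (P : Set C) : Prop :=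
  PseudoClusterTilting E P ∧ SelfOrthWrt P E

/-- The class `𝒮` of conflations. -/
def memS (E : ConfClass C) (P : Set C) ⦃S₁ S₂ S₃ : C⦄ (i : S₁ ⟶ S₂) (d : S₂ ⟶ S₃) : Prop :=
  E i d ∧ ∃ (U M₁ M₂ : C) (u₁ : U ⟶ S₁) (p₁ : S₁ ⟶ M₁) (u₂ : U ⟶ S₂) (p₂ : S₂ ⟶ M₂)
    (m : M₁ ⟶ M₂) (q : M₂ ⟶ S₃),
    E u₁ p₁ ∧ E u₂ p₂ ∧ E m q ∧
    HomCovExact P u₂ p₂ ∧ HomContraExact P m q ∧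
    u₁ ≫ i = u₂ ∧ i ≫ p₂ = p₁ ≫ m ∧ d = p₂ ≫ q

/-- The class `𝒯` of conflations. -/
def memT (E : ConfClass C) (P : Set C) ⦃T₁ T₂ T₃ : C⦄ (i : T₁ ⟶ T₂) (d : T₂ ⟶ T₃) : Prop :=
  E i d ∧ ∃ (V N₂ N₃ : C) (n₁ : T₁ ⟶ N₂) (n₂ : N₂ ⟶ N₃) (j₂ : N₂ ⟶ T₂) (v₂ : T₂ ⟶ V)
    (j₃ : N₃ ⟶ T₃) (v₃ : T₃ ⟶ V),
    E n₁ n₂ ∧ E j₂ v₂ ∧ E j₃ v₃ ∧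
    HomCovExact P n₁ n₂ ∧ HomContraExact P j₂ v₂ ∧
    i = n₁ ≫ j₂ ∧ n₂ ≫ j₃ = j₂ ≫ d ∧ d ≫ v₃ = v₂

end Exact

section AbelianDefs

/-- A preadditive category is abelian (in the sense of Definition 2.1 of the paper) if it
has kernels and cokernels and the canonical morphism from the coimage to the image of any
morphism is an isomorphism. -/
def IsAbelianCat (D : Type*) [Category D] [Preadditive D] : Prop :=
  ∃ (hk : HasKernels D) (hc : HasCokernels D),
    ∀ {X Y : D} (f : X ⟶ Y),
      haveI := hk; haveI := hc
      IsIso (CategoryTheory.Abelian.coimageImageComparison f)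

/-- A preadditive category is semi-abelian if it has kernels and cokernels and the
canonical morphism from the coimage to the image of any morphism is both an epimorphism
and a monomorphism. -/
def IsSemiAbelianCat (D : Type*) [Category D] [Preadditive D] : Prop :=
  ∃ (hk : HasKernels D) (hc : HasCokernels D),
    ∀ {X Y : D} (f : X ⟶ Y),
      haveI := hk; haveI := hc
      Mono (CategoryTheory.Abelian.coimageImageComparison f) ∧
      Epi (CategoryTheory.Abelian.coimageImageComparison f)

end AbelianDefs

section ConflationCategory

variable {M : Type u} [Category.{v} M] [Preadditive M]

/-- Objects of the category `E(M)` of conflations: conflations `0 → X₁ → X₂ → X₃ → 0`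
of the exact category `(M, E)`. -/
structure ConfObj (E : ExactStructure M) : Type max u v where
  X₁ : M
  X₂ : M
  X₃ : M
  i : X₁ ⟶ X₂
  d : X₂ ⟶ X₃
  conf : E.conf i d

variable {E : ExactStructure M}

/-- The additive group of morphisms of conflations: triples of morphisms making the two
squares commute. -/
def confHomGroup (A B : ConfObj E) :
    AddSubgroup ((A.X₁ ⟶ B.X₁) × (A.X₂ ⟶ B.X₂) × (A.X₃ ⟶ B.X₃)) where
  carrier := {t | A.i ≫ t.2.1 = t.1 ≫ B.i ∧ A.d ≫ t.2.2 = t.2.1 ≫ B.d}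
  zero_mem' := by simp
  add_mem' := by
    rintro a b ⟨ha₁, ha₂⟩ ⟨hb₁, hb₂⟩
    refine ⟨?_, ?_⟩ <;>
      simp [Preadditive.comp_add, Preadditive.add_comp, ha₁, ha₂, hb₁, hb₂]
  neg_mem' := by
    rintro a ⟨h₁, h₂⟩
    refine ⟨?_, ?_⟩ <;> simp [h₁, h₂]

instance confCategoryStruct : CategoryStruct.{v} (ConfObj E) where
  Hom A B := ↥(confHomGroup A B)
  id A := ⟨(𝟙 _, 𝟙 _, 𝟙 _), by constructor <;> simp⟩
  comp {A B D} f g := ⟨(f.1.1 ≫ g.1.1, f.1.2.1 ≫ g.1.2.1, f.1.2.2 ≫ g.1.2.2), by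
    obtain ⟨hf₁, hf₂⟩ := f.2
    obtain ⟨hg₁, hg₂⟩ := g.2
    constructor
    · rw [← Category.assoc, hf₁, Category.assoc, hg₁, ← Category.assoc]
    · rw [← Category.assoc, hf₂, Category.assoc, hg₂, ← Category.assoc]⟩

/-- Degree `-1` component of a morphism of conflations. -/
def homC₁ {A B : ConfObj E} (f : A ⟶ B) : A.X₁ ⟶ B.X₁ := f.1.1

/-- Degree `0` component of a morphism of conflations. -/
def homC₂ {A B : ConfObj E} (f : A ⟶ B) : A.X₂ ⟶ B.X₂ := f.1.2.1

/-- Degree `1` component of a morphism of conflations. -/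
def homC₃ {A B : ConfObj E} (f : A ⟶ B) : A.X₃ ⟶ B.X₃ := f.1.2.2

lemma confHom_ext {A B : ConfObj E} {f g : A ⟶ B} (h₁ : homC₁ f = homC₁ g)
    (h₂ : homC₂ f = homC₂ g) (h₃ : homC₃ f = homC₃ g) : f = g := by
  apply Subtype.ext
  show (homC₁ f, homC₂ f, homC₃ f) = (homC₁ g, homC₂ g, homC₃ g)
  rw [h₁, h₂, h₃]

@[simp] lemma homC₁_id (A : ConfObj E) : homC₁ (𝟙 A) = 𝟙 A.X₁ := rfl
@[simp] lemma homC₂_id (A : ConfObj E) : homC₂ (𝟙 A) = 𝟙 A.X₂ := rfl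
@[simp] lemma homC₃_id (A : ConfObj E) : homC₃ (𝟙 A) = 𝟙 A.X₃ := rfl
@[simp] lemma homC₁_comp {A B D : ConfObj E} (f : A ⟶ B) (g : B ⟶ D) :
    homC₁ (f ≫ g) = homC₁ f ≫ homC₁ g := rfl
@[simp] lemma homC₂_comp {A B D : ConfObj E} (f : A ⟶ B) (g : B ⟶ D) :
    homC₂ (f ≫ g) = homC₂ f ≫ homC₂ g := rfl
@[simp] lemma homC₃_comp {A B D : ConfObj E} (f : A ⟶ B) (g : B ⟶ D) :
    homC₃ (f ≫ g) = homC₃ f ≫ homC₃ g := rfl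

instance confCategory : Category.{v} (ConfObj E) where
  id_comp f := confHom_ext (by simp) (by simp) (by simp)
  comp_id f := confHom_ext (by simp) (by simp) (by simp)
  assoc f g h := confHom_ext (by simp) (by simp) (by simp)

instance confHomAddCommGroup (A B : ConfObj E) : AddCommGroup (A ⟶ B) :=
  inferInstanceAs (AddCommGroup ↥(confHomGroup A B))

@[simp] lemma homC₁_add {A B : ConfObj E} (f g : A ⟶ B) :
    homC₁ (f + g) = homC₁ f + homC₁ g := rfl
@[simp] lemma homC₂_add {A B : ConfObj E} (f g : A ⟶ B) :
    homC₂ (f + g) = homC₂ f + homC₂ g := rfl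
@[simp] lemma homC₃_add {A B : ConfObj E} (f g : A ⟶ B) :
    homC₃ (f + g) = homC₃ f + homC₃ g := rfl

instance confPreadditive : Preadditive (ConfObj E) where
  homGroup A B := inferInstance
  add_comp A B D f f' g :=
    confHom_ext (by simp [Preadditive.add_comp]) (by simp [Preadditive.add_comp])
      (by simp [Preadditive.add_comp])
  comp_add A B D f g g' :=
    confHom_ext (by simp [Preadditive.comp_add]) (by simp [Preadditive.comp_add])
      (by simp [Preadditive.comp_add])

/-- The degree-wise class of conflations on `E(M)`: a short sequence of conflations is a
conflation if it is a conflation of `M` in each degree. -/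
def degConf (E : ExactStructure M) : ConfClass (ConfObj E) := fun _ _ _ f g =>
  E.conf (homC₁ f) (homC₁ g) ∧ E.conf (homC₂ f) (homC₂ g) ∧ E.conf (homC₃ f) (homC₃ g)

/-- The class `E₀`: degree-wise conflations splitting in degree `0`. -/
def degConf₀ (E : ExactStructure M) : ConfClass (ConfObj E) := fun _ _ _ f g =>
  degConf E f g ∧ Splits (homC₂ f) (homC₂ g)

/-- The class `E₀⁻¹`: degree-wise conflations splitting in degrees `-1` and `0`. -/
def degConf₀neg (E : ExactStructure M) : ConfClass (ConfObj E) := fun _ _ _ f g =>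
  degConf E f g ∧ Splits (homC₁ f) (homC₁ g) ∧ Splits (homC₂ f) (homC₂ g)

/-- The class `E₀¹`: degree-wise conflations splitting in degrees `0` and `1`. -/
def degConf₀pos (E : ExactStructure M) : ConfClass (ConfObj E) := fun _ _ _ f g =>
  degConf E f g ∧ Splits (homC₂ f) (homC₂ g) ∧ Splits (homC₃ f) (homC₃ g)

/-- The full subcategory `S(M)` of `E(M)` consisting of the split conflations. -/
def splitObjs (E : ExactStructure M) : Set (ConfObj E) :=
  {A | Splits A.i A.d}

end ConflationCategory

section DegenerateConflations

variable {C : Type u} [Category.{v} C] [Preadditive C]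

lemma homCovExact_id_zero (P : Set C) (X : C) {W : C} (hW : IsZero W) :
    HomCovExact P (𝟙 X) (0 : X ⟶ W) := fun _ _ =>
  ⟨fun g hg => by simpa using hg, fun u _ => ⟨u, Category.comp_id u⟩,
    fun _ => ⟨0, hW.eq_of_tgt _ _⟩⟩

lemma homContraExact_id_zero (P : Set C) (Y : C) {V : C} (hV : IsZero V) :
    HomContraExact P (𝟙 Y) (0 : Y ⟶ V) := fun _ _ =>
  ⟨fun g _ => hV.eq_of_src _ _, fun u hu => ⟨0, by simpa using hu.symm⟩,
    fun h => ⟨h, Category.id_comp h⟩⟩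

end DegenerateConflations

namespace ExactStructure

variable {M : Type u} [Category.{v} M] [Preadditive M]

-- The cokernel of `𝟙 X` is zero: both `𝟙 V` and `0` factor `0 : X ⟶ V` through `v = 0`.
lemma isZero_of_conf_id_left (E : ExactStructure M) {X V : M} {v : X ⟶ V}
    (h : E.conf (𝟙 X) v) : IsZero V := by
  obtain ⟨hv, huniv⟩ := E.coker_of_conf h
  rw [Category.id_comp] at hv
  obtain ⟨_, _, hunique⟩ := huniv (0 : X ⟶ V) (Category.id_comp _)
  rw [IsZero.iff_id_eq_zero]
  exact (hunique (𝟙 V) (by simp [hv])).trans (hunique 0 (by simp)).symm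

lemma isZero_of_conf_id_right (E : ExactStructure M) {W Z : M} {i : W ⟶ Z}
    (h : E.conf i (𝟙 Z)) : IsZero W := by
  obtain ⟨hi, huniv⟩ := E.ker_of_conf h
  rw [Category.comp_id] at hi
  obtain ⟨_, _, hunique⟩ := huniv (0 : W ⟶ Z) (Category.comp_id _)
  rw [IsZero.iff_id_eq_zero]
  exact (hunique (𝟙 W) (by simp [hi])).trans (hunique 0 (by simp)).symm

lemma exists_isZero (E : ExactStructure M) (X : M) : ∃ V : M, IsZero V :=
  let ⟨_, _, h⟩ := E.id_isInflation X
  ⟨_, E.isZero_of_conf_id_left h⟩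

lemma conf_id_zero (E : ExactStructure M) (X : M) {V : M} (hV : IsZero V) :
    E.conf (𝟙 X) (0 : X ⟶ V) := by
  obtain ⟨_, _, h⟩ := E.id_isInflation X
  exact E.isoClosed (Iso.refl X) (Iso.refl X) ((E.isZero_of_conf_id_left h).iso hV)
    rfl (hV.eq_of_tgt _ _) h

lemma conf_zero_id (E : ExactStructure M) (Z : M) {W : M} (hW : IsZero W) :
    E.conf (0 : W ⟶ Z) (𝟙 Z) := by
  obtain ⟨_, _, h⟩ := E.id_isDeflation Z
  exact E.isoClosed ((E.isZero_of_conf_id_right h).iso hW) (Iso.refl Z) (Iso.refl Z)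
    ((E.isZero_of_conf_id_right h).eq_of_src _ _) rfl h

end ExactStructure

section MemT

variable {M : Type u} [Category.{v} M] [Preadditive M] (E : ExactStructure M) (P : Set M)

-- Take `V = 0`, `N₂ = T₂`, `N₃ = T₃`: then `(n₁, n₂)` is the given conflation.
lemma memT_of_homCovExact {X Y Z : M} {i : X ⟶ Y} {d : Y ⟶ Z} (hconf : E.conf i d)
    (hcov : HomCovExact P i d) : memT E.conf P i d := by
  obtain ⟨V, hV⟩ := E.exists_isZero Y
  exact ⟨hconf, V, Y, Z, i, d, 𝟙 Y, 0, 𝟙 Z, 0, hconf, E.conf_id_zero Y hV,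
    E.conf_id_zero Z hV, hcov, homContraExact_id_zero P Y hV, (Category.comp_id i).symm,
    by rw [Category.comp_id, Category.id_comp], comp_zero⟩

-- Take `N₃ = 0`, `N₂ = T₁`, `V = T₃`: then `(j₂, v₂)` is the given conflation.
lemma memT_of_homContraExact {X Y Z : M} {i : X ⟶ Y} {d : Y ⟶ Z} (hconf : E.conf i d)
    (hcontra : HomContraExact P i d) : memT E.conf P i d := by
  obtain ⟨W, hW⟩ := E.exists_isZero X
  exact ⟨hconf, Z, X, W, 𝟙 X, 0, i, d, 0, 𝟙 Z, E.conf_id_zero X hW, hconf,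
    E.conf_zero_id Z hW, homCovExact_id_zero P X hW, hcontra, (Category.id_comp i).symm,
    by rw [zero_comp, (E.ker_of_conf hconf).1], Category.comp_id d⟩

end MemT

theorem homExact_mem_T_general {M : Type u} [Category.{v} M] [Preadditive M]
    (E : ExactStructure M) (P : Set M)
    {X Y Z : M} (i : X ⟶ Y) (d : Y ⟶ Z)
    (hconf : E.conf i d) (hexact : HomCovExact P i d ∨ HomContraExact P i d) :
    memT E.conf P i d :=
  hexact.elim (memT_of_homCovExact E P hconf) (memT_of_homContraExact E P hconf)

/-- every conflation which is `Hom(𝒫,-)`-exact or `Hom(-,𝒫)`-exact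
belongs to the class `𝒯`. -/
theorem homExact_mem_T {M : Type u} [Category.{v} M] [Preadditive M]
    [HasBinaryBiproducts M] (E : ExactStructure M) (P : Set M) (hP : IsAddSubcat P)
    (h : PseudoClusterTilting E.conf P) {X Y Z : M} (i : X ⟶ Y) (d : Y ⟶ Z)
    (hconf : E.conf i d) (hexact : HomCovExact P i d ∨ HomContraExact P i d) :
    memT E.conf P i d :=
  homExact_mem_T_general E P i d hconf hexact

end PaperQEC
end

section
/- Let (M, E) be an exact category. Then the full subcategory S(M) of split conflations is a pseudo-cluster tilting subcategory of the exact category (E(M), E) of conflations with the degree-wise exact structure: S(M) is strongly functorially finite in (E(M), E), and every object X• of E(M) admits a conflation 0 → P1• → P0• → X• → 0 with P0•, P1• ∈ S(M) whose deflation is an S(M)-precover, and a conflation 0 → X• → Q0• → Q1• → 0 with Q0•, Q1• ∈ S(M) whose inflation is an S(M)-preenvelope. -/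
open CategoryTheory CategoryTheory.Limits

universe v u

namespace PaperQEC

/-! Every conflation `A` receives a morphism `precoverMap A` from the split conflation
`A₁ → A₁ ⊞ A₂ → A₂`, natural in `A`. A split conflation is a retract of the source of its own
`precoverMap`, so by naturality every morphism from a split conflation to `A` factors through
`precoverMap A`. Its kernel, computed degree-wise, is the split conflation `0 → A₁ → A₁`, mapped
in by `0`, the graph `[1, -i]` and `-i`. Dually `A → (A₂ → A₂ ⊞ A₃ → A₃)` is an
`S(M)`-preenvelope with cokernel the split conflation `A₃ → A₃ → 0`. -/

section KernelsCokernels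

variable {C : Type u} [Category.{v} C] [Preadditive C]

lemma IsKernelOf.hom_ext {K X Y : C} {k : K ⟶ X} {f : X ⟶ Y} (hk : IsKernelOf k f) {T : C}
    {a b : T ⟶ K} (h : a ≫ k = b ≫ k) : a = b :=
  (hk.2 (a ≫ k) (by rw [Category.assoc, hk.1, comp_zero])).unique rfl h.symm

lemma IsCokernelOf.hom_ext {X Y Q : C} {c : Y ⟶ Q} {f : X ⟶ Y} (hc : IsCokernelOf c f) {T : C}
    {a b : Q ⟶ T} (h : c ≫ a = c ≫ b) : a = b :=
  (hc.2 (c ≫ a) (by rw [← Category.assoc, hc.1, zero_comp])).unique rfl h.symm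

lemma IsCokernelOf.exists_iso {X Y Q Q' : C} {f : X ⟶ Y} {c : Y ⟶ Q} {c' : Y ⟶ Q'}
    (hc : IsCokernelOf c f) (hc' : IsCokernelOf c' f) : ∃ e : Q ≅ Q', c ≫ e.hom = c' := by
  obtain ⟨u, hu, -⟩ := hc.2 c' hc'.1
  obtain ⟨v, hv, -⟩ := hc'.2 c hc.1
  exact ⟨⟨u, v, hc.hom_ext (by simp [reassoc_of% hu, hv]),
    hc'.hom_ext (by simp [reassoc_of% hv, hu])⟩, hu⟩

lemma isCokernelOf_of_isColimit {X Y : C} {f : X ⟶ Y} {s : CokernelCofork f}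
    (hs : IsColimit s) : IsCokernelOf s.π f :=
  ⟨CokernelCofork.condition s, fun g hg =>
    ⟨(CokernelCofork.IsColimit.desc' hs g hg).1, (CokernelCofork.IsColimit.desc' hs g hg).2,
      fun _ ht => Cofork.IsColimit.hom_ext hs
        (ht.trans (CokernelCofork.IsColimit.desc' hs g hg).2.symm)⟩⟩

end KernelsCokernels

namespace ExactStructure

variable {C : Type u} [Category.{v} C] [Preadditive C] (E : ExactStructure C)

lemma conf_of_isCokernelOf {X Y Z Z' : C} {i : X ⟶ Y} {d : Y ⟶ Z} {d' : Y ⟶ Z'}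
    (h : E.conf i d) (hd' : IsCokernelOf d' i) : E.conf i d' := by
  obtain ⟨e, he⟩ := (E.coker_of_conf h).exists_iso hd'
  exact E.isoClosed (Iso.refl _) (Iso.refl _) e (by simp) (by simpa using he) h

lemma conf_neg_left {X Y Z : C} {i : X ⟶ Y} {d : Y ⟶ Z} (h : E.conf i d) : E.conf (-i) d :=
  E.isoClosed ⟨-𝟙 X, -𝟙 X, by simp, by simp⟩ (Iso.refl _) (Iso.refl _) (by simp) (by simp) h

lemma conf_neg_right {X Y Z : C} {i : X ⟶ Y} {d : Y ⟶ Z} (h : E.conf i d) : E.conf i (-d) :=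
  E.isoClosed (Iso.refl _) (Iso.refl _) ⟨-𝟙 Z, -𝟙 Z, by simp, by simp⟩ (by simp) (by simp) h

lemma isZero_of_conf_id_right_s12 {W X : C} {k : W ⟶ X} (h : E.conf k (𝟙 X)) : IsZero W := by
  have hk := E.ker_of_conf h
  refine (IsZero.iff_id_eq_zero W).mpr (hk.hom_ext ?_)
  simpa using hk.1

lemma isZero_of_conf_id_left_s12 {X Z : C} {z : X ⟶ Z} (h : E.conf (𝟙 X) z) : IsZero Z := by
  have hz := E.coker_of_conf h
  refine (IsZero.iff_id_eq_zero Z).mpr (hz.hom_ext ?_)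
  simpa using hz.1

lemma exists_splitting_of_retraction {X Y Z : C} {i : X ⟶ Y} {d : Y ⟶ Z} (h : E.conf i d)
    {r : Y ⟶ X} (hr : i ≫ r = 𝟙 X) : ∃ s : Z ⟶ Y, s ≫ d = 𝟙 Z ∧ r ≫ i + d ≫ s = 𝟙 Y := by
  have hd := E.coker_of_conf h
  obtain ⟨s, hs, -⟩ := hd.2 (𝟙 Y - r ≫ i) (by simp [reassoc_of% hr])
  refine ⟨s, hd.hom_ext ?_, by rw [hs]; abel⟩
  simp [reassoc_of% hs, (E.ker_of_conf h).1]

-- Split sequences are not among the axioms; this one is the pushout of `0 ⟶ Y` along `0 ⟶ X`.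
lemma conf_inl_snd (X Y : C) [HasBinaryBiproduct X Y] :
    E.conf (biprod.inl : X ⟶ X ⊞ Y) biprod.snd := by
  obtain ⟨W, k, hk⟩ := E.id_isDeflation Y
  have hW := E.isZero_of_conf_id_right_s12 hk
  obtain ⟨B, i, g, ⟨Q, d, hid⟩, hB⟩ := E.infl_pushout k ⟨Y, 𝟙 Y, hk⟩ (0 : W ⟶ X)
  have hbiprod : IsPushout k (0 : W ⟶ X) biprod.inr biprod.inl := by
    rw [hW.eq_of_src k (hW.isInitial.to Y), hW.eq_of_src 0 (hW.isInitial.to X)]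
    exact (IsPushout.of_is_coproduct' (BinaryBiproduct.isColimit X Y) hW.isInitial).flip
  let e := hB.isoIsPushout _ _ hbiprod
  have hinl : E.conf biprod.inl (e.inv ≫ d) :=
    E.isoClosed (Iso.refl X) e (Iso.refl Q) (by simp [e]) (by simp) hid
  exact E.conf_of_isCokernelOf hinl
    (isCokernelOf_of_isColimit (biprod.isCokernelInlCokernelFork X Y))

lemma conf_lift_desc [HasBinaryBiproducts C] {X Y : C} (r : X ⟶ Y) :
    E.conf (biprod.lift (𝟙 X) r) (biprod.desc (-r) (𝟙 Y)) :=
  E.isoClosed (Iso.refl X) (Biprod.unipotentUpper r) (Iso.refl Y)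
    (by ext <;> simp) (by ext <;> simp [Biprod.ofComponents]) (E.conf_inl_snd X Y)

end ExactStructure

section SplitConflations

variable {M : Type u} [Category.{v} M] [Preadditive M] {E : ExactStructure M}

def confHomMk {A B : ConfObj E} (f₁ : A.X₁ ⟶ B.X₁) (f₂ : A.X₂ ⟶ B.X₂) (f₃ : A.X₃ ⟶ B.X₃)
    (w₁₂ : A.i ≫ f₂ = f₁ ≫ B.i) (w₂₃ : A.d ≫ f₃ = f₂ ≫ B.d) : A ⟶ B :=
  ⟨(f₁, f₂, f₃), w₁₂, w₂₃⟩

@[simp] lemma homC₁_confHomMk {A B : ConfObj E} (f₁ : A.X₁ ⟶ B.X₁) (f₂ : A.X₂ ⟶ B.X₂)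
    (f₃ : A.X₃ ⟶ B.X₃) (w₁₂ w₂₃) : homC₁ (confHomMk f₁ f₂ f₃ w₁₂ w₂₃) = f₁ := rfl
@[simp] lemma homC₂_confHomMk {A B : ConfObj E} (f₁ : A.X₁ ⟶ B.X₁) (f₂ : A.X₂ ⟶ B.X₂)
    (f₃ : A.X₃ ⟶ B.X₃) (w₁₂ w₂₃) : homC₂ (confHomMk f₁ f₂ f₃ w₁₂ w₂₃) = f₂ := rfl
@[simp] lemma homC₃_confHomMk {A B : ConfObj E} (f₁ : A.X₁ ⟶ B.X₁) (f₂ : A.X₂ ⟶ B.X₂)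
    (f₃ : A.X₃ ⟶ B.X₃) (w₁₂ w₂₃) : homC₃ (confHomMk f₁ f₂ f₃ w₁₂ w₂₃) = f₃ := rfl

lemma comm₁₂ {A B : ConfObj E} (g : A ⟶ B) : A.i ≫ homC₂ g = homC₁ g ≫ B.i := g.2.1

lemma comm₂₃ {A B : ConfObj E} (g : A ⟶ B) : A.d ≫ homC₃ g = homC₂ g ≫ B.d := g.2.2

@[simp] lemma ConfObj.i_comp_d (A : ConfObj E) : A.i ≫ A.d = 0 := (E.ker_of_conf A.conf).1

@[simp] lemma ConfObj.i_comp_d_assoc (A : ConfObj E) {T : M} (f : A.X₃ ⟶ T) :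
    A.i ≫ A.d ≫ f = 0 := by
  rw [← Category.assoc, A.i_comp_d, zero_comp]

variable [HasBinaryBiproducts M]

variable (E) in
noncomputable abbrev splitConf (X Y : M) : ConfObj E :=
  ⟨X, X ⊞ Y, Y, biprod.inl, biprod.snd, E.conf_inl_snd X Y⟩

lemma splitConf_mem (X Y : M) : splitConf E X Y ∈ splitObjs E :=
  ⟨⟨biprod.fst, biprod.inl_fst⟩, biprod.inr, biprod.inr_snd⟩

noncomputable def splitConfMap {X Y X' Y' : M} (a : X ⟶ X') (b : Y ⟶ Y') :
    splitConf E X Y ⟶ splitConf E X' Y' :=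
  confHomMk a (biprod.map a b) b (by simp) (by simp)

noncomputable def precoverMap (A : ConfObj E) : splitConf E A.X₁ A.X₂ ⟶ A :=
  confHomMk (𝟙 _) (biprod.desc A.i (𝟙 _)) A.d (by simp) (by ext <;> simp)

noncomputable def preenvelopeMap (A : ConfObj E) : A ⟶ splitConf E A.X₂ A.X₃ :=
  confHomMk A.i (biprod.lift (𝟙 _) A.d) (𝟙 _) (by ext <;> simp) (by simp)

lemma splitConfMap_comp_precoverMap {A B : ConfObj E} (g : A ⟶ B) :
    splitConfMap (homC₁ g) (homC₂ g) ≫ precoverMap B = precoverMap A ≫ g :=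
  confHom_ext (by simp [splitConfMap, precoverMap])
    (by ext <;> simp [splitConfMap, precoverMap, comm₁₂])
    (by simp [splitConfMap, precoverMap, comm₂₃])

lemma preenvelopeMap_comp_splitConfMap {A B : ConfObj E} (g : A ⟶ B) :
    preenvelopeMap A ≫ splitConfMap (homC₂ g) (homC₃ g) = g ≫ preenvelopeMap B :=
  confHom_ext (by simp [splitConfMap, preenvelopeMap, comm₁₂])
    (by ext <;> simp [splitConfMap, preenvelopeMap, comm₂₃])
    (by simp [splitConfMap, preenvelopeMap])

lemma exists_section_precoverMap {A : ConfObj E} (hA : A ∈ splitObjs E) :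
    ∃ σ : A ⟶ splitConf E A.X₁ A.X₂, σ ≫ precoverMap A = 𝟙 A := by
  obtain ⟨⟨r, hr⟩, -⟩ := hA
  obtain ⟨s, hs, hrs⟩ := E.exists_splitting_of_retraction A.conf hr
  refine ⟨confHomMk (𝟙 _) (biprod.lift r (A.d ≫ s)) s (by ext <;> simp [hr])
    (by simp), confHom_ext ?_ ?_ ?_⟩ <;> simp [precoverMap, hrs, hs]

lemma exists_retraction_preenvelopeMap {A : ConfObj E} (hA : A ∈ splitObjs E) :
    ∃ ρ : splitConf E A.X₂ A.X₃ ⟶ A, preenvelopeMap A ≫ ρ = 𝟙 A := by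
  obtain ⟨⟨r, hr⟩, -⟩ := hA
  obtain ⟨s, hs, hrs⟩ := E.exists_splitting_of_retraction A.conf hr
  refine ⟨confHomMk r (biprod.desc (r ≫ A.i) s) (𝟙 _) (by simp)
    (by ext <;> simp [hs]), confHom_ext ?_ ?_ ?_⟩ <;> simp [preenvelopeMap, hr, hrs]

lemma isPrecover_precoverMap (A : ConfObj E) : IsPrecover (splitObjs E) (precoverMap A) := by
  refine ⟨splitConf_mem _ _, fun Q hQ g => ?_⟩
  obtain ⟨σ, hσ⟩ := exists_section_precoverMap hQ
  exact ⟨σ ≫ splitConfMap (homC₁ g) (homC₂ g), by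
    rw [Category.assoc, splitConfMap_comp_precoverMap, reassoc_of% hσ]⟩

lemma isPreenvelope_preenvelopeMap (A : ConfObj E) :
    IsPreenvelope (splitObjs E) (preenvelopeMap A) := by
  refine ⟨splitConf_mem _ _, fun Q hQ g => ?_⟩
  obtain ⟨ρ, hρ⟩ := exists_retraction_preenvelopeMap hQ
  exact ⟨splitConfMap (homC₂ g) (homC₃ g) ≫ ρ, by
    rw [reassoc_of% preenvelopeMap_comp_splitConfMap, hρ, Category.comp_id]⟩

lemma exists_degConf_precoverMap (A : ConfObj E) :
    ∃ (P : ConfObj E) (ι : P ⟶ splitConf E A.X₁ A.X₂),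
      P ∈ splitObjs E ∧ degConf E ι (precoverMap A) := by
  obtain ⟨W, k, hk⟩ := E.id_isDeflation A.X₁
  have hW := E.isZero_of_conf_id_right_s12 hk
  refine ⟨⟨W, A.X₁, A.X₁, k, 𝟙 _, hk⟩,
    confHomMk k (biprod.lift (𝟙 _) (-A.i)) (-A.i) (hW.eq_of_src _ _) (by simp),
    ⟨⟨0, hW.eq_of_src _ _⟩, 𝟙 _, Category.id_comp _⟩, hk, ?_, E.conf_neg_left A.conf⟩
  simpa [precoverMap] using E.conf_lift_desc (-A.i)

lemma exists_degConf_preenvelopeMap (A : ConfObj E) :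
    ∃ (Q : ConfObj E) (q : splitConf E A.X₂ A.X₃ ⟶ Q),
      Q ∈ splitObjs E ∧ degConf E (preenvelopeMap A) q := by
  obtain ⟨Z, z, hz⟩ := E.id_isInflation A.X₃
  have hZ := E.isZero_of_conf_id_left_s12 hz
  refine ⟨⟨A.X₃, A.X₃, Z, 𝟙 _, z, hz⟩,
    confHomMk (-A.d) (biprod.desc (-A.d) (𝟙 _)) z (by simp) (hZ.eq_of_tgt _ _),
    ⟨⟨𝟙 _, Category.id_comp _⟩, 0, hZ.eq_of_src _ _⟩, E.conf_neg_right A.conf, ?_, hz⟩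
  simpa [preenvelopeMap] using E.conf_lift_desc A.d

end SplitConflations

/-- `S(M)` is a pseudo-cluster tilting subcategory of the category of
conflations `E(M)` with the degree-wise exact structure. -/
theorem splitObjs_pseudoClusterTilting {M : Type u} [Category.{v} M] [Preadditive M]
    [HasBinaryBiproducts M] (E : ExactStructure M) :
    PseudoClusterTilting (degConf E) (splitObjs E) := by
  refine ⟨⟨fun A => ?_, fun A => ?_⟩, ⟨fun A => ?_, fun A => ?_⟩⟩
  · obtain ⟨Q, q, -, hq⟩ := exists_degConf_preenvelopeMap A
    exact ⟨_, _, isPreenvelope_preenvelopeMap A, Q, q, hq⟩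
  · obtain ⟨Q, q, hQ, hq⟩ := exists_degConf_preenvelopeMap A
    exact ⟨_, Q, _, q, hq, splitConf_mem _ _, hQ, isPreenvelope_preenvelopeMap A⟩
  · obtain ⟨P, ι, -, hι⟩ := exists_degConf_precoverMap A
    exact ⟨_, _, isPrecover_precoverMap A, P, ι, hι⟩
  · obtain ⟨P, ι, hP, hι⟩ := exists_degConf_precoverMap A
    exact ⟨_, P, ι, _, hι, splitConf_mem _ _, hP, isPrecover_precoverMap A⟩

end PaperQEC
end
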